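/- Let θ be a real parameter with 0 < b̃ < θ ≤ a, and θ̃ an estimator with P(|θ̃ − θ| ≥ ε) ≤ c₁(1 − ε²/c₁)^M for all ε ∈ (0, c]. Then there exists c' > 0 such that P(|√(θ̃) − √θ| ≥ ε) ≤ c'(1 − ε²/c')^M for all ε ∈ (0, c] (where √(θ̃) is interpreted as √(max{θ̃, 0}) when θ̃ may be negative). -/

import Mathlib

open MeasureTheory

/-!
Since `(√x - √θ)(√x + √θ) = x - θ`, every deviation of `√θ̃` by `ε` forces a deviation of `θ̃`
by `√θ ε ≥ k ε`, where `k = min (√b̃) 1` (capped at `1` so that `k ε` stays in `(0, c]`).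
The tail bound at `k ε` is again of the form `c' (1 - ε² / c') ^ M`, with `c' = c₁ / k²`.
-/

lemma Real.sqrt_mul_abs_sqrt_sub_sqrt_le (x θ : ℝ) : √θ * |√x - √θ| ≤ |x - θ| := by
  rcases le_or_gt θ 0 with hθ | hθ
  · simp [Real.sqrt_eq_zero_of_nonpos hθ]
  rcases le_or_gt x 0 with hx | hx
  · rw [Real.sqrt_eq_zero_of_nonpos hx, zero_sub, abs_neg, abs_of_pos (Real.sqrt_pos.2 hθ),
      Real.mul_self_sqrt hθ.le, abs_of_neg (by linarith)]
    linarith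
  have hfactor : |x - θ| = |√x - √θ| * (√x + √θ) := by
    rw [← abs_of_pos (by positivity : 0 < √x + √θ), ← abs_mul, mul_comm, ← sq_sub_sq,
      Real.sq_sqrt hx.le, Real.sq_sqrt hθ.le]
  rw [hfactor, mul_comm]
  gcongr
  exact le_add_of_nonneg_left (Real.sqrt_nonneg x)

lemma Real.mul_le_abs_sub_of_le_abs_sqrt_sub_sqrt {x θ k ε : ℝ} (hk : k ≤ √θ) (hε : 0 ≤ ε)
    (h : ε ≤ |√x - √θ|) : k * ε ≤ |x - θ| :=
  calc k * ε ≤ √θ * |√x - √θ| := mul_le_mul hk h hε (Real.sqrt_nonneg θ)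
    _ ≤ |x - θ| := Real.sqrt_mul_abs_sqrt_sub_sqrt_le x θ

lemma tail_bound_at_mul_le {c c₁ k ε : ℝ} (M : ℕ) (hc₁ : c ^ 2 < c₁) (hk : 0 < k) (hk1 : k ≤ 1)
    (hε : ε ∈ Set.Ioc 0 c) :
    c₁ * (1 - (k * ε) ^ 2 / c₁) ^ M ≤ c₁ / k ^ 2 * (1 - ε ^ 2 / (c₁ / k ^ 2)) ^ M := by
  obtain ⟨hε0, hεc⟩ := hε
  have hc₁0 : 0 < c₁ := lt_of_le_of_lt (sq_nonneg c) hc₁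
  have hk2 : k ^ 2 ≤ 1 := pow_le_one₀ hk.le hk1
  have hrescale : (k * ε) ^ 2 / c₁ = ε ^ 2 / (c₁ / k ^ 2) := by field_simp
  have hbase : 0 ≤ 1 - (k * ε) ^ 2 / c₁ := by
    have : (k * ε) ^ 2 ≤ c ^ 2 := by
      rw [mul_pow]
      nlinarith [pow_le_pow_left₀ hε0.le hεc 2, sq_nonneg ε]
    rw [sub_nonneg, div_le_one hc₁0]
    linarith
  rw [← hrescale]
  gcongr
  exact le_div_self hc₁0.le (by positivity) hk2

theorem concentration_sqrt_general
    {Ω : Type*} [MeasurableSpace Ω] (μ : Measure Ω) [IsProbabilityMeasure μ]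
    (θtilde : Ω → ℝ)
    (θ btilde c c₁ : ℝ) (M : ℕ)
    (hbt : 0 < btilde) (hθl : btilde < θ)
    (hc₁ : c ^ 2 < c₁)
    (hconc : ∀ ε ∈ Set.Ioc (0 : ℝ) c,
      (μ {ω | ε ≤ |θtilde ω - θ|}).toReal ≤ c₁ * (1 - ε ^ 2 / c₁) ^ M) :
    ∃ c' > (0 : ℝ), ∀ ε ∈ Set.Ioc (0 : ℝ) c,
      (μ {ω | ε ≤ |Real.sqrt (θtilde ω) - Real.sqrt θ|}).toReal
        ≤ c' * (1 - ε ^ 2 / c') ^ M := by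
  set k := min (√btilde) 1
  have hk : 0 < k := lt_min (Real.sqrt_pos.2 hbt) one_pos
  have hk1 : k ≤ 1 := min_le_right _ _
  have hkθ : k ≤ √θ := (min_le_left _ _).trans (Real.sqrt_le_sqrt hθl.le)
  have hc₁0 : 0 < c₁ := lt_of_le_of_lt (sq_nonneg c) hc₁
  refine ⟨c₁ / k ^ 2, by positivity, fun ε hε => ?_⟩
  have hkε : k * ε ∈ Set.Ioc 0 c :=
    ⟨mul_pos hk hε.1, (mul_le_of_le_one_left hε.1.le hk1).trans hε.2⟩
  have hsub : {ω | ε ≤ |√(θtilde ω) - √θ|} ⊆ {ω | k * ε ≤ |θtilde ω - θ|} := fun ω hω =>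
    Real.mul_le_abs_sub_of_le_abs_sqrt_sub_sqrt hkθ hε.1.le hω
  calc (μ {ω | ε ≤ |√(θtilde ω) - √θ|}).toReal
      ≤ (μ {ω | k * ε ≤ |θtilde ω - θ|}).toReal :=
        ENNReal.toReal_mono (measure_ne_top μ _) (measure_mono hsub)
    _ ≤ c₁ * (1 - (k * ε) ^ 2 / c₁) ^ M := hconc _ hkε
    _ ≤ c₁ / k ^ 2 * (1 - ε ^ 2 / (c₁ / k ^ 2)) ^ M := tail_bound_at_mul_le M hc₁ hk hk1 hε

/-- Square-root part (Lem-8) of Lemma 1: if `0 < b̃ < θ ≤ a` and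
`P(|θ̃ − θ| ≥ ε) ≤ c₁(1 − ε²/c₁)^M` for `ε ∈ (0, c]`, then there is `c' > 0` with
`P(|√θ̃ − √θ| ≥ ε) ≤ c'(1 − ε²/c')^M` for all `ε ∈ (0, c]`
(with `√θ̃` interpreted as `√(max θ̃ 0)` via `Real.sqrt`). -/
theorem concentration_sqrt
    {Ω : Type*} [MeasurableSpace Ω] (μ : Measure Ω) [IsProbabilityMeasure μ]
    (θtilde : Ω → ℝ) (hmeas : Measurable θtilde)
    (θ a btilde c c₁ : ℝ) (M : ℕ) (hM : 0 < M)
    (hbt : 0 < btilde) (hθl : btilde < θ) (hθu : θ ≤ a)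
    (hc : 0 < c) (hc₁ : c ^ 2 < c₁)
    (hconc : ∀ ε ∈ Set.Ioc (0 : ℝ) c,
      (μ {ω | ε ≤ |θtilde ω - θ|}).toReal ≤ c₁ * (1 - ε ^ 2 / c₁) ^ M) :
    ∃ c' > (0 : ℝ), ∀ ε ∈ Set.Ioc (0 : ℝ) c,
      (μ {ω | ε ≤ |Real.sqrt (θtilde ω) - Real.sqrt θ|}).toReal
        ≤ c' * (1 - ε ^ 2 / c') ^ M :=
  concentration_sqrt_general μ θtilde θ btilde c c₁ M hbt hθl hc₁ hconc
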